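/- arXiv:2603.25114 — 4 statements merged into one kernel-verified Lean document; each statement's English description precedes it below -/
import Mathlib

section
/- Let M ≻ 0 and T > 0, and define J(p) = tr(W(p,T)⁻¹M) on the set X_T ∩ Δₙ, where X_T = {p : W(p,T) ≻ 0} and Δₙ is the simplex. If X_T ∩ Δₙ is nonempty, then J attains its minimum on X_T ∩ Δₙ (every sublevel set {p ∈ X_T ∩ Δₙ : J(p) ≤ c} is compact). -/
open MeasureTheory Matrix Filter

namespace WaecsAux

variable {n : ℕ}

open scoped MatrixOrder

lemma psd_decomp {B : Matrix (Fin n) (Fin n) ℝ} (hB : B.PosSemidef) :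
    ∃ C : Matrix (Fin n) (Fin n) ℝ, B = Cᴴ * C :=
  ⟨CFC.sqrt B, by
    rw [(CFC.sqrt_nonneg B).posSemidef.1.eq]; exact (CFC.sqrt_mul_sqrt_self B hB.nonneg).symm⟩

lemma star_vec (y : Fin n → ℝ) : star y = y := by
  funext i; exact rfl

lemma dot_self_nonneg (x : Fin n → ℝ) : 0 ≤ x ⬝ᵥ x :=
  Finset.sum_nonneg fun i _ => mul_self_nonneg (x i)

lemma psd_quad_nonneg {B : Matrix (Fin n) (Fin n) ℝ} (hB : B.PosSemidef)
    (x : Fin n → ℝ) : 0 ≤ x ⬝ᵥ B *ᵥ x := by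
  have := hB.dotProduct_mulVec_nonneg x
  rwa [star_vec] at this

lemma quad_le_trace {B : Matrix (Fin n) (Fin n) ℝ} (hB : B.PosSemidef)
    (x : Fin n → ℝ) : x ⬝ᵥ B *ᵥ x ≤ B.trace * (x ⬝ᵥ x) := by
  obtain ⟨C, rfl⟩ := psd_decomp hB
  have hCt : Cᴴ = Cᵀ := by ext i j; simp [conjTranspose_apply]
  have h1 : x ⬝ᵥ (Cᴴ * C) *ᵥ x = (C *ᵥ x) ⬝ᵥ (C *ᵥ x) := by
    rw [hCt, ← mulVec_mulVec, dotProduct_mulVec, vecMul_transpose]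
  rw [h1]
  calc (C *ᵥ x) ⬝ᵥ (C *ᵥ x) = ∑ i, (∑ j, C i j * x j) ^ 2 := by
        simp [dotProduct, mulVec, sq]
    _ ≤ ∑ i, (∑ j, (C i j) ^ 2) * (∑ j, (x j) ^ 2) :=
        Finset.sum_le_sum fun i _ => Finset.sum_mul_sq_le_sq_mul_sq _ _ _
    _ = (∑ i, ∑ j, (C i j) ^ 2) * (x ⬝ᵥ x) := by
        rw [← Finset.sum_mul]; congr 1; simp [dotProduct, sq]
    _ = (Cᴴ * C).trace * (x ⬝ᵥ x) := by
        congr 1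
        rw [Finset.sum_comm]
        simp [Matrix.trace, Matrix.diag, Matrix.mul_apply, hCt, sq]

lemma psd_trace_nonneg {B : Matrix (Fin n) (Fin n) ℝ} (hB : B.PosSemidef) :
    0 ≤ B.trace := by
  rw [Matrix.trace]
  refine Finset.sum_nonneg fun i _ => ?_
  have := psd_quad_nonneg hB (Pi.single i 1)
  simpa [Matrix.diag, dotProduct, mulVec, Pi.single_apply, Finset.sum_ite_eq,
    Finset.sum_ite_eq'] using this

lemma trace_mul_psd_nonneg {A B : Matrix (Fin n) (Fin n) ℝ}
    (hA : A.PosSemidef) (hB : B.PosSemidef) : 0 ≤ (A * B).trace := by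
  obtain ⟨C, rfl⟩ := psd_decomp hB
  rw [← mul_assoc, Matrix.trace_mul_cycle]
  exact psd_trace_nonneg (hA.mul_mul_conjTranspose_same C)

lemma cauchy_quad {Wm : Matrix (Fin n) (Fin n) ℝ} (hWm : Wm.PosDef) (x : Fin n → ℝ) :
    (x ⬝ᵥ x) ^ 2 ≤ (x ⬝ᵥ Wm *ᵥ x) * (x ⬝ᵥ Wm⁻¹ *ᵥ x) := by
  have hR : Wm.PosDef := hWm
  set R := CFC.sqrt Wm with hRdef
  have hRpsd : R.PosSemidef := (CFC.sqrt_nonneg Wm).posSemidef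
  have hRR : R * R = Wm := CFC.sqrt_mul_sqrt_self Wm hWm.posSemidef.nonneg
  have hRt : Rᵀ = R := by
    ext i j
    have := congr_fun (congr_fun hRpsd.1 i) j
    simpa [conjTranspose_apply] using this
  have hdet0 : R.det ≠ 0 := by
    intro h
    have h1 : R.det * R.det = Wm.det := by rw [← Matrix.det_mul, hRR]
    rw [h, zero_mul] at h1
    exact hWm.det_pos.ne' h1.symm
  have hinv : R * R⁻¹ = 1 := Matrix.mul_nonsing_inv R (isUnit_iff_ne_zero.mpr hdet0)
  have hWinv : Wm⁻¹ = R⁻¹ * R⁻¹ := by rw [← hRR, Matrix.mul_inv_rev]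
  have hRinvT : (R⁻¹)ᵀ = R⁻¹ := by rw [Matrix.transpose_nonsing_inv, hRt]
  have hxx : x ⬝ᵥ x = (R *ᵥ x) ⬝ᵥ (R⁻¹ *ᵥ x) := by
    conv_lhs => rw [show x ⬝ᵥ x = x ⬝ᵥ (R * R⁻¹) *ᵥ x by rw [hinv, Matrix.one_mulVec]]
    rw [← Matrix.mulVec_mulVec, Matrix.dotProduct_mulVec, ← hRt, Matrix.vecMul_transpose, hRt]
  have haa : x ⬝ᵥ Wm *ᵥ x = (R *ᵥ x) ⬝ᵥ (R *ᵥ x) := by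
    rw [← hRR, ← Matrix.mulVec_mulVec, Matrix.dotProduct_mulVec, ← hRt,
      Matrix.vecMul_transpose, hRt]
  have hbb : x ⬝ᵥ Wm⁻¹ *ᵥ x = (R⁻¹ *ᵥ x) ⬝ᵥ (R⁻¹ *ᵥ x) := by
    rw [hWinv, ← Matrix.mulVec_mulVec, Matrix.dotProduct_mulVec, ← hRinvT,
      Matrix.vecMul_transpose, hRinvT]
  rw [hxx, haa, hbb]
  simpa [dotProduct, sq] using
    Finset.sum_mul_sq_le_sq_mul_sq Finset.univ (R *ᵥ x) (R⁻¹ *ᵥ x)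



lemma dot_self_pos {y : Fin n → ℝ} (hy : y ≠ 0) : 0 < y ⬝ᵥ y :=
  lt_of_le_of_ne (dot_self_nonneg y)
    (fun h => hy (dotProduct_self_eq_zero.mp h.symm))

lemma exists_eps {M : Matrix (Fin n) (Fin n) ℝ} (hM : M.PosDef) :
    ∃ ε : ℝ, 0 < ε ∧ ∀ y : Fin n → ℝ, ε * (y ⬝ᵥ y) ≤ y ⬝ᵥ M *ᵥ y := by
  rcases isEmpty_or_nonempty (Fin n) with hn | hn
  · exact ⟨1, one_pos, fun y => by simp [dotProduct]⟩
  · set K : Set (Fin n → ℝ) := {x | x ⬝ᵥ x = 1} with hKdef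
    have hKc : IsClosed K :=
      isClosed_eq (Continuous.dotProduct continuous_id continuous_id) continuous_const
    have hKb : Bornology.IsBounded K := by
      refine Bornology.IsBounded.subset (Metric.isBounded_closedBall (x := 0) (r := 1)) ?_
      intro x hx
      have hx1 : x ⬝ᵥ x = 1 := hx
      rw [Metric.mem_closedBall, dist_zero_right]
      rw [pi_norm_le_iff_of_nonneg zero_le_one]
      intro i
      rw [Real.norm_eq_abs, abs_le_one_iff_mul_self_le_one]
      calc x i * x i ≤ ∑ j, x j * x j :=
            Finset.single_le_sum (fun j _ => mul_self_nonneg (x j)) (Finset.mem_univ i)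
        _ = 1 := hx1
    have hK : IsCompact K := Metric.isCompact_of_isClosed_isBounded hKc hKb
    obtain ⟨i0⟩ := hn
    have hx0 : (Pi.single i0 1 : Fin n → ℝ) ∈ K := by
      show (Pi.single i0 1 : Fin n → ℝ) ⬝ᵥ Pi.single i0 1 = 1
      simp [dotProduct, Pi.single_apply]
    have hfc : Continuous fun x : Fin n → ℝ => x ⬝ᵥ M *ᵥ x :=
      Continuous.dotProduct continuous_id
        (Continuous.matrix_mulVec continuous_const continuous_id)
    obtain ⟨z, hzK, hz⟩ := hK.exists_isMinOn ⟨_, hx0⟩ hfc.continuousOn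
    have hz1 : z ⬝ᵥ z = 1 := hzK
    have hz0 : z ≠ 0 := by
      intro h; rw [h] at hz1; simp [dotProduct] at hz1
    have hεpos : 0 < z ⬝ᵥ M *ᵥ z := by
      have := hM.dotProduct_mulVec_pos hz0; rwa [star_vec] at this
    refine ⟨z ⬝ᵥ M *ᵥ z, hεpos, fun y => ?_⟩
    rcases eq_or_ne y 0 with rfl | hy
    · simp
    · have hs : 0 < y ⬝ᵥ y := dot_self_pos hy
      set c : ℝ := (Real.sqrt (y ⬝ᵥ y))⁻¹ with hc
      have hcc : c * c * (y ⬝ᵥ y) = 1 := by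
        rw [hc, ← mul_inv]
        rw [Real.mul_self_sqrt hs.le]
        exact inv_mul_cancel₀ hs.ne'
      have hxK : (c • y) ∈ K := by
        show (c • y) ⬝ᵥ (c • y) = 1
        rw [smul_dotProduct, dotProduct_smul, smul_eq_mul, smul_eq_mul,
          ← mul_assoc]
        exact hcc
      have h2 : z ⬝ᵥ M *ᵥ z ≤ (c • y) ⬝ᵥ M *ᵥ (c • y) := hz hxK
      have hfx : (c • y) ⬝ᵥ M *ᵥ (c • y) = c * c * (y ⬝ᵥ M *ᵥ y) := by
        rw [Matrix.mulVec_smul, smul_dotProduct, dotProduct_smul,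
          smul_eq_mul, smul_eq_mul, ← mul_assoc]
      rw [hfx] at h2
      calc (z ⬝ᵥ M *ᵥ z) * (y ⬝ᵥ y) ≤ c * c * (y ⬝ᵥ M *ᵥ y) * (y ⬝ᵥ y) :=
            mul_le_mul_of_nonneg_right h2 hs.le
        _ = (y ⬝ᵥ M *ᵥ y) * (c * c * (y ⬝ᵥ y)) := by ring
        _ = y ⬝ᵥ M *ᵥ y := by rw [hcc, mul_one]

lemma key_bound {Wm M : Matrix (Fin n) (Fin n) ℝ} (hWm : Wm.PosDef) (hM : M.PosDef)
    {ε : ℝ} (hε : 0 < ε) (hMε : ∀ y : Fin n → ℝ, ε * (y ⬝ᵥ y) ≤ y ⬝ᵥ M *ᵥ y)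
    (x : Fin n → ℝ) :
    ε * (x ⬝ᵥ x) ≤ (Wm⁻¹ * M).trace * (x ⬝ᵥ Wm *ᵥ x) := by
  have hWinv : Wm⁻¹.PosDef := hWm.inv
  have hMε' : (M - ε • (1 : Matrix (Fin n) (Fin n) ℝ)).PosSemidef := by
    refine Matrix.PosSemidef.of_dotProduct_mulVec_nonneg ?_ ?_
    · show (M - ε • (1 : Matrix (Fin n) (Fin n) ℝ))ᴴ = _
      rw [conjTranspose_sub, hM.1.eq]
      congr 1
      ext i j
      simp [conjTranspose_apply, Matrix.one_apply, eq_comm]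
    · intro y
      rw [star_vec]
      have := hMε y
      rw [Matrix.sub_mulVec, dotProduct_sub, Matrix.smul_mulVec,
        Matrix.one_mulVec, dotProduct_smul, smul_eq_mul]
      linarith
  have h1 : 0 ≤ (Wm⁻¹ * (M - ε • 1)).trace :=
    trace_mul_psd_nonneg hWinv.posSemidef hMε'
  have h1' : ε * Wm⁻¹.trace ≤ (Wm⁻¹ * M).trace := by
    have heq : (Wm⁻¹ * (M - ε • (1:Matrix (Fin n) (Fin n) ℝ))).trace
        = (Wm⁻¹ * M).trace - ε * Wm⁻¹.trace := by
      rw [mul_sub, Matrix.trace_sub, Matrix.mul_smul, Matrix.trace_smul, mul_one,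
        smul_eq_mul]
    rw [heq] at h1
    linarith
  have h2 : x ⬝ᵥ Wm⁻¹ *ᵥ x ≤ Wm⁻¹.trace * (x ⬝ᵥ x) := quad_le_trace hWinv.posSemidef x
  have h3 : (x ⬝ᵥ x) ^ 2 ≤ (x ⬝ᵥ Wm *ᵥ x) * (x ⬝ᵥ Wm⁻¹ *ᵥ x) := cauchy_quad hWm x
  have hs : 0 ≤ x ⬝ᵥ x := dot_self_nonneg x
  have hw : 0 ≤ x ⬝ᵥ Wm *ᵥ x := psd_quad_nonneg hWm.posSemidef x
  have hv : 0 ≤ x ⬝ᵥ Wm⁻¹ *ᵥ x := psd_quad_nonneg hWinv.posSemidef x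
  have htr : 0 ≤ Wm⁻¹.trace := psd_trace_nonneg hWinv.posSemidef
  rcases eq_or_lt_of_le hs with h0 | h0
  · rw [← h0, mul_zero]
    exact mul_nonneg (le_trans (by positivity) h1') hw
  · -- ε s² ≤ ε w v ≤ w ε (tr s) ≤ t w s, divide by s
    have hchain : ε * (x ⬝ᵥ x) * (x ⬝ᵥ x) ≤ (Wm⁻¹ * M).trace * (x ⬝ᵥ Wm *ᵥ x) * (x ⬝ᵥ x) := by
      nlinarith [mul_le_mul_of_nonneg_left h3 hε.le,
        mul_le_mul_of_nonneg_left h2 (mul_nonneg hε.le hw),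
        mul_le_mul_of_nonneg_right h1' (mul_nonneg hw hs)]
    exact le_of_mul_le_mul_right hchain h0

end WaecsAux

open WaecsAux

attribute [local instance] Matrix.normedAddCommGroup Matrix.normedSpace

/-- for `M ≻ 0` and `T > 0`, `J(p) = tr(W(p,T)⁻¹M)` attains its
minimum on `X_T ∩ Δₙ` (and every sublevel set is compact), provided the
feasible set is nonempty. -/
theorem waecs_exists_minimizer {n : ℕ} (A : Matrix (Fin n) (Fin n) ℝ)
    (T : ℝ) (hT : 0 < T)
    (M : Matrix (Fin n) (Fin n) ℝ) (hM : M.PosDef)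
    (Wi : Fin n → Matrix (Fin n) (Fin n) ℝ)
    (hWi : Wi = fun i => ∫ t in (0:ℝ)..T,
        NormedSpace.exp (t • A) * Matrix.single i i 1 *
          NormedSpace.exp (t • Aᵀ))
    (W : (Fin n → ℝ) → Matrix (Fin n) (Fin n) ℝ)
    (hW : W = fun p => ∑ i : Fin n, p i • Wi i)
    (J : (Fin n → ℝ) → ℝ) (hJ : J = fun p => ((W p)⁻¹ * M).trace)
    (S : Set (Fin n → ℝ))
    (hS : S = {p | (W p).PosDef ∧ p ∈ stdSimplex ℝ (Fin n)})
    (hne : S.Nonempty) :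
    (∃ p ∈ S, ∀ q ∈ S, J p ≤ J q) ∧
    (∀ c : ℝ, IsCompact {p ∈ S | J p ≤ c}) := by
  -- continuity of W
  have hWc : Continuous W := by
    rw [hW]
    exact continuous_finset_sum _ fun i _ => (continuous_apply i).smul continuous_const
  -- continuity of J where det ≠ 0
  have hUopen : IsOpen {p : Fin n → ℝ | (W p).det ≠ 0} :=
    isOpen_compl_singleton.preimage hWc.matrix_det
  have hJU : ContinuousOn J {p : Fin n → ℝ | (W p).det ≠ 0} := by
    rw [hJ]
    have hJeq : (fun p => ((W p)⁻¹ * M).trace)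
        = fun p => (((W p).det⁻¹ • (W p).adjugate) * M).trace := by
      funext p
      rw [Matrix.inv_def, Ring.inverse_eq_inv]
    rw [hJeq]
    have hcont2 : Continuous fun X : Matrix (Fin n) (Fin n) ℝ => (X * M).trace :=
      (Continuous.matrix_mul continuous_id continuous_const).matrix_trace
    exact hcont2.comp_continuousOn
      ((hWc.matrix_det.continuousOn.inv₀ fun p hp => hp).smul
        hWc.matrix_adjugate.continuousOn)
  have hJat : ∀ p, (W p).det ≠ 0 → ContinuousAt J p := fun p hp =>
    hJU.continuousAt (hUopen.mem_nhds hp)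
  obtain ⟨ε, hε, hMε⟩ := exists_eps hM
  -- Part 2: compactness of sublevel sets
  have hcomp : ∀ c : ℝ, IsCompact {p ∈ S | J p ≤ c} := by
    intro c
    have hclosed : IsClosed {p ∈ S | J p ≤ c} := by
      apply IsSeqClosed.isClosed
      intro x p hmem htend
      have hmemS : ∀ k, (W (x k)).PosDef ∧ x k ∈ stdSimplex ℝ (Fin n) := fun k => by
        have := (hmem k).1; rwa [hS] at this
      have hJle : ∀ k, ((W (x k))⁻¹ * M).trace ≤ c := fun k => by
        have := (hmem k).2; rwa [hJ] at this
      have hsimplex : p ∈ stdSimplex ℝ (Fin n) :=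
        (isClosed_stdSimplex _ _).mem_of_tendsto htend
          (Eventually.of_forall fun k => (hmemS k).2)
      have hWlim : Tendsto (fun k => W (x k)) atTop (nhds (W p)) :=
        (hWc.tendsto _).comp htend
      have hherm : (W p).IsHermitian := by
        have h1 : Tendsto (fun k => (W (x k))ᴴ) atTop (nhds (W p)ᴴ) :=
          ((Continuous.matrix_conjTranspose continuous_id).tendsto _).comp hWlim
        have h2 : (fun k => (W (x k))ᴴ) = fun k => W (x k) :=
          funext fun k => (hmemS k).1.1
        rw [h2] at h1
        exact tendsto_nhds_unique h1 hWlim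
      have hquadlim : ∀ y : Fin n → ℝ,
          Tendsto (fun k => y ⬝ᵥ (W (x k)) *ᵥ y) atTop (nhds (y ⬝ᵥ (W p) *ᵥ y)) := by
        intro y
        exact ((Continuous.dotProduct continuous_const
          (Continuous.matrix_mulVec continuous_id continuous_const)).tendsto _).comp hWlim
      have hpsd : ∀ y : Fin n → ℝ, 0 ≤ y ⬝ᵥ (W p) *ᵥ y := fun y =>
        ge_of_tendsto (hquadlim y)
          (Eventually.of_forall fun k => psd_quad_nonneg (hmemS k).1.posSemidef y)
      have hpos : (W p).PosDef := by
        by_contra hnot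
        have h' : ¬ ∀ y : Fin n → ℝ, y ≠ 0 → 0 < star y ⬝ᵥ (W p *ᵥ y) := fun h2 => hnot (posDef_iff_dotProduct_mulVec.mpr ⟨hherm, h2⟩)
        push_neg at h'
        obtain ⟨y, hy0, hyle⟩ := h'
        rw [star_trivial] at hyle
        have hyz : y ⬝ᵥ (W p) *ᵥ y = 0 := le_antisymm hyle (hpsd y)
        have hs : 0 < y ⬝ᵥ y := dot_self_pos hy0
        have hkey : ∀ k, ε * (y ⬝ᵥ y) ≤ c * (y ⬝ᵥ (W (x k)) *ᵥ y) := fun k => by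
          have h1 := key_bound (hmemS k).1 hM hε hMε y
          have h2 := hJle k
          have hw : 0 ≤ y ⬝ᵥ (W (x k)) *ᵥ y :=
            psd_quad_nonneg (hmemS k).1.posSemidef y
          nlinarith
        have hq : Tendsto (fun k => c * (y ⬝ᵥ (W (x k)) *ᵥ y)) atTop (nhds 0) := by
          have := (tendsto_const_nhds (x := c)).mul (hquadlim y)
          rwa [hyz, mul_zero] at this
        have hle := ge_of_tendsto hq (Eventually.of_forall hkey)
        nlinarith
      have hdetp : (W p).det ≠ 0 := hpos.det_pos.ne'
      have hJlim : Tendsto (fun k => J (x k)) atTop (nhds (J p)) :=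
        ((hJat p hdetp).tendsto).comp htend
      have hJpc : J p ≤ c :=
        le_of_tendsto hJlim (Eventually.of_forall fun k => (hmem k).2)
      exact ⟨by rw [hS]; exact ⟨hpos, hsimplex⟩, hJpc⟩
    refine IsCompact.of_isClosed_subset (isCompact_stdSimplex _ _) hclosed ?_
    intro p hp
    have := hp.1
    rw [hS] at this
    exact this.2
  refine ⟨?_, hcomp⟩
  obtain ⟨p₀, hp₀⟩ := hne
  have hKne : {p ∈ S | J p ≤ J p₀}.Nonempty := ⟨p₀, hp₀, le_rfl⟩
  have hJon : ContinuousOn J {p ∈ S | J p ≤ J p₀} := by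
    refine hJU.mono ?_
    intro p hp
    have := hp.1
    rw [hS] at this
    exact this.1.det_pos.ne'
  obtain ⟨q, hq, hqmin⟩ := (hcomp (J p₀)).exists_isMinOn hKne hJon
  rw [isMinOn_iff] at hqmin
  refine ⟨q, hq.1, fun r hr => ?_⟩
  rcases le_or_gt (J r) (J p₀) with h | h
  · exact hqmin r ⟨hr, h⟩
  · exact le_trans (hqmin p₀ ⟨hp₀, le_rfl⟩) h.le
end

section
/- Let W ≻ 0, M ≻ 0 be symmetric matrices and Δ a symmetric matrix with Δ ≠ 0. Then tr(W⁻¹ Δ W⁻¹ Δ W⁻¹ M) > 0. (Equivalently, with A = W^{-1/2}ΔW^{-1/2} ≠ 0 and B = W^{-1/2}MW^{-1/2} ≻ 0, one has tr(A²B) = tr(B^{1/2}A²B^{1/2}) > 0.) -/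
open Matrix
set_option maxHeartbeats 1000000

lemma trace_mul_mul_conjTranspose_pos {n : ℕ} (M C : Matrix (Fin n) (Fin n) ℝ)
    (hM : M.PosDef) (hC : C ≠ 0) : 0 < (C * M * Cᴴ).trace := by
  have hdiag : ∀ i, (C * M * Cᴴ) i i = star (C i) ⬝ᵥ (M *ᵥ (C i)) := by
    intro i
    simp only [mul_apply, conjTranspose_apply, dotProduct, mulVec, star, Finset.sum_mul,
      Finset.mul_sum, RCLike.star_def, map_id]
    rw [Finset.sum_comm]
    apply Finset.sum_congr rfl
    intro j _
    apply Finset.sum_congr rfl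
    intro k _
    ring_nf
  have hex : ∃ i, C i ≠ 0 := by
    by_contra h
    push_neg at h
    exact hC (by ext i j; simp [h i])
  obtain ⟨i0, hi0⟩ := hex
  rw [Matrix.trace]
  apply Finset.sum_pos'
  · intro i _
    rw [Matrix.diag_apply, hdiag i]
    exact hM.posSemidef.dotProduct_mulVec_nonneg (C i)
  · refine ⟨i0, Finset.mem_univ _, ?_⟩
    rw [Matrix.diag_apply, hdiag i0]
    exact hM.dotProduct_mulVec_pos hi0

/-- for symmetric `W ≻ 0`, `M ≻ 0` and symmetric `Δ ≠ 0`,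
`tr(W⁻¹ΔW⁻¹ΔW⁻¹M) > 0`. -/
theorem trace_inv_quadratic_pos {n : ℕ}
    (W M Δ : Matrix (Fin n) (Fin n) ℝ)
    (hW : W.PosDef) (hM : M.PosDef) (hΔ : Δ.IsHermitian) (hΔ0 : Δ ≠ 0) :
    0 < (W⁻¹ * Δ * W⁻¹ * Δ * W⁻¹ * M).trace := by
  set X := W⁻¹ with hXdef
  have hX : X.PosDef := hW.inv
  obtain ⟨S, hSh, hSS⟩ : ∃ S : Matrix (Fin n) (Fin n) ℝ, S.IsHermitian ∧ S * S = X :=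
    by open scoped MatrixOrder in
      exact ⟨CFC.sqrt X, (CFC.sqrt_nonneg X).posSemidef.1, CFC.sqrt_mul_sqrt_self X hX.posSemidef.nonneg⟩
  have hXh : X.IsHermitian := hX.isHermitian
  -- S is invertible
  have hdetS : S.det ≠ 0 := by
    intro h
    have : X.det = 0 := by rw [← hSS, det_mul, h, mul_zero]
    exact hX.det_pos.ne' this
  have hdetX : X.det ≠ 0 := hX.det_pos.ne'
  set C := S * Δ * X with hCdef
  have hC0 : C ≠ 0 := by
    intro h
    apply hΔ0
    have : S⁻¹ * C * X⁻¹ = S⁻¹ * 0 * X⁻¹ := by rw [h]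
    rw [hCdef] at this
    simp only [mul_zero, zero_mul] at this
    calc Δ = (S⁻¹ * S) * Δ * (X * X⁻¹) := by
          rw [Matrix.nonsing_inv_mul _ hdetS.isUnit, Matrix.mul_nonsing_inv _ hdetX.isUnit, one_mul, mul_one]
      _ = S⁻¹ * (S * Δ * X) * X⁻¹ := by noncomm_ring
      _ = 0 := this
  have key : 0 < (C * M * Cᴴ).trace := trace_mul_mul_conjTranspose_pos M C hM hC0
  have hCh : Cᴴ = X * Δ * S := by
    rw [hCdef, conjTranspose_mul, conjTranspose_mul, hSh.eq, hXh.eq, hΔ.eq]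
    noncomm_ring
  have : (C * M * Cᴴ).trace = (W⁻¹ * Δ * W⁻¹ * Δ * W⁻¹ * M).trace := by
    rw [Matrix.trace_mul_cycle, hCh, hCdef]
    congr 1
    calc X * Δ * S * (S * Δ * X) * M = X * Δ * (S * S) * Δ * X * M := by noncomm_ring
      _ = W⁻¹ * Δ * W⁻¹ * Δ * W⁻¹ * M := by rw [hSS, hXdef]
  linarith [this ▸ key]
end

section
/- Let M ≻ 0 and T > 0. Assume that for every nonzero d ∈ ℝⁿ with 𝟏ᵀd = 0 the matrix ΔW(d) = Σᵢ dᵢ Wᵢ(T) is nonzero. Then the function p ↦ tr(W(p,T)⁻¹M) is strictly convex on the convex set X_T ∩ Δₙ: for any p ≠ q in X_T ∩ Δₙ and t ∈ (0,1), J((1−t)p + tq) < (1−t)J(p) + tJ(q). -/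
open MeasureTheory Matrix

attribute [local instance] Matrix.normedAddCommGroup Matrix.normedSpace

section SqrtCompat

open scoped MatrixOrder

noncomputable def Matrix.PosSemidef.sqrt {n : ℕ} {X : Matrix (Fin n) (Fin n) ℝ}
    (_ : X.PosSemidef) : Matrix (Fin n) (Fin n) ℝ := CFC.sqrt X

lemma Matrix.PosSemidef.sqrt_mul_self {n : ℕ} {X : Matrix (Fin n) (Fin n) ℝ}
    (h : X.PosSemidef) : h.sqrt * h.sqrt = X := CFC.sqrt_mul_sqrt_self X h.nonneg

lemma Matrix.PosSemidef.posSemidef_sqrt {n : ℕ} {X : Matrix (Fin n) (Fin n) ℝ}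
    (h : X.PosSemidef) : h.sqrt.PosSemidef := (CFC.sqrt_nonneg X).posSemidef

end SqrtCompat

section WaecsAux

variable {n : ℕ}

lemma trace_tQ_nonneg (Q : Matrix (Fin n) (Fin n) ℝ) : 0 ≤ (Qᵀ * Q).trace := by
  simp only [Matrix.trace, Matrix.diag, Matrix.mul_apply, Matrix.transpose_apply]
  exact Finset.sum_nonneg fun i _ => Finset.sum_nonneg fun j _ => mul_self_nonneg _

lemma trace_tQ_eq_zero (Q : Matrix (Fin n) (Fin n) ℝ) (h : (Qᵀ * Q).trace = 0) : Q = 0 := by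
  simp only [Matrix.trace, Matrix.diag, Matrix.mul_apply, Matrix.transpose_apply] at h
  ext j i
  have h1 : ∀ i ∈ Finset.univ, (0:ℝ) ≤ ∑ j : Fin n, Q j i * Q j i :=
    fun i _ => Finset.sum_nonneg fun j _ => mul_self_nonneg _
  have h2 := (Finset.sum_eq_zero_iff_of_nonneg h1).mp h i (Finset.mem_univ i)
  have h3 := (Finset.sum_eq_zero_iff_of_nonneg
    (fun j _ => mul_self_nonneg (Q j i))).mp h2 j (Finset.mem_univ j)
  simpa [mul_self_eq_zero] using h3

lemma sym_of_psd {X : Matrix (Fin n) (Fin n) ℝ} (h : X.PosSemidef) : Xᵀ = X := by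
  rw [← conjTranspose_eq_transpose_of_trivial]; exact h.isHermitian

lemma sqrt_isUnit {X : Matrix (Fin n) (Fin n) ℝ} (hX : X.PosDef) :
    IsUnit hX.posSemidef.sqrt := by
  rw [Matrix.isUnit_iff_isUnit_det]
  have h : hX.posSemidef.sqrt.det * hX.posSemidef.sqrt.det = X.det := by
    rw [← Matrix.det_mul, hX.posSemidef.sqrt_mul_self]
  have : X.det ≠ 0 := hX.det_pos.ne'
  exact isUnit_iff_ne_zero.mpr (fun h0 => this (by rw [← h, h0, mul_zero]))

lemma trace_DXDM_eq {X M D : Matrix (Fin n) (Fin n) ℝ} (hX : X.PosDef) (hM : M.PosDef)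
    (hD : Dᵀ = D) :
    ((D * X * D) * M).trace =
      ((hX.posSemidef.sqrt * D * hM.posSemidef.sqrt)ᵀ *
        (hX.posSemidef.sqrt * D * hM.posSemidef.sqrt)).trace := by
  set R := hX.posSemidef.sqrt with hRdef
  set S := hM.posSemidef.sqrt with hSdef
  have hR : R * R = X := hX.posSemidef.sqrt_mul_self
  have hS : S * S = M := hM.posSemidef.sqrt_mul_self
  have hRs : Rᵀ = R := sym_of_psd hX.posSemidef.posSemidef_sqrt
  have hSs : Sᵀ = S := sym_of_psd hM.posSemidef.posSemidef_sqrt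
  have key : (R * D * S)ᵀ * (R * D * S) = S * ((D * X * D) * S) := by
    rw [transpose_mul, transpose_mul, hRs, hSs, hD, ← hR]
    simp only [Matrix.mul_assoc]
  calc ((D * X * D) * M).trace = ((D * X * D) * (S * S)).trace := by rw [hS]
    _ = (((D * X * D) * S) * S).trace := by simp only [Matrix.mul_assoc]
    _ = (S * ((D * X * D) * S)).trace := Matrix.trace_mul_comm _ _
    _ = _ := by rw [← key]

lemma trace_DXDM_nonneg {X M D : Matrix (Fin n) (Fin n) ℝ} (hX : X.PosDef) (hM : M.PosDef)
    (hD : Dᵀ = D) : 0 ≤ ((D * X * D) * M).trace := by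
  rw [trace_DXDM_eq hX hM hD]; exact trace_tQ_nonneg _

lemma trace_DXDM_pos {X M D : Matrix (Fin n) (Fin n) ℝ} (hX : X.PosDef) (hM : M.PosDef)
    (hD : Dᵀ = D) (hD0 : D ≠ 0) : 0 < ((D * X * D) * M).trace := by
  rcases lt_or_eq_of_le (trace_DXDM_nonneg hX hM hD) with h | h
  · exact h
  exfalso
  apply hD0
  have hQ : hX.posSemidef.sqrt * D * hM.posSemidef.sqrt = 0 :=
    trace_tQ_eq_zero _ (by rw [← trace_DXDM_eq hX hM hD, ← h])
  set R := hX.posSemidef.sqrt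
  set S := hM.posSemidef.sqrt
  have hRu : IsUnit R.det := (Matrix.isUnit_iff_isUnit_det R).mp (sqrt_isUnit hX)
  have hSu : IsUnit S.det := (Matrix.isUnit_iff_isUnit_det S).mp (sqrt_isUnit hM)
  have : R⁻¹ * (R * D * S) * S⁻¹ = D := by
    rw [Matrix.mul_assoc R D S, ← Matrix.mul_assoc R⁻¹ R (D * S),
      Matrix.nonsing_inv_mul R hRu, Matrix.one_mul, Matrix.mul_assoc D S S⁻¹,
      Matrix.mul_nonsing_inv S hSu, Matrix.mul_one]
  rw [← this, hQ, Matrix.mul_zero, Matrix.zero_mul]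

lemma trace_inv_lower {X M C : Matrix (Fin n) (Fin n) ℝ} (hX : X.PosDef) (hM : M.PosDef)
    (hC : Cᵀ = C) :
    ((X⁻¹ * M).trace - (2 * (C * M).trace - ((C * X * C) * M).trace)) =
      (((X⁻¹ - C) * X * (X⁻¹ - C)) * M).trace := by
  have hXu : IsUnit X.det := (Matrix.isUnit_iff_isUnit_det X).mp hX.isUnit
  have h1 : X⁻¹ * X = 1 := Matrix.nonsing_inv_mul X hXu
  have h2 : X * X⁻¹ = 1 := Matrix.mul_nonsing_inv X hXu
  have hid : (X⁻¹ - C) * X * (X⁻¹ - C) = X⁻¹ - C - C + C * X * C := by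
    rw [Matrix.sub_mul, h1, Matrix.sub_mul, Matrix.one_mul, Matrix.mul_sub,
      Matrix.mul_assoc C X X⁻¹, h2, Matrix.mul_one]
    abel
  rw [hid]
  simp only [Matrix.sub_mul, Matrix.add_mul, Matrix.trace_sub, Matrix.trace_add]
  ring

lemma Dsym {X C : Matrix (Fin n) (Fin n) ℝ} (hX : X.PosDef) (hC : Cᵀ = C) :
    (X⁻¹ - C)ᵀ = X⁻¹ - C := by
  rw [Matrix.transpose_sub, hC, Matrix.transpose_nonsing_inv, sym_of_psd hX.posSemidef]

lemma trace_ineq_le {X M C : Matrix (Fin n) (Fin n) ℝ} (hX : X.PosDef) (hM : M.PosDef)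
    (hC : Cᵀ = C) :
    2 * (C * M).trace - ((C * X * C) * M).trace ≤ (X⁻¹ * M).trace := by
  have := trace_DXDM_nonneg (D := X⁻¹ - C) hX hM (Dsym hX hC)
  have h := trace_inv_lower (C := C) hX hM hC
  linarith

lemma trace_ineq_lt {X M C : Matrix (Fin n) (Fin n) ℝ} (hX : X.PosDef) (hM : M.PosDef)
    (hC : Cᵀ = C) (hne : C ≠ X⁻¹) :
    2 * (C * M).trace - ((C * X * C) * M).trace < (X⁻¹ * M).trace := by
  have hD0 : X⁻¹ - C ≠ 0 := sub_ne_zero.mpr (Ne.symm hne)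
  have := trace_DXDM_pos (D := X⁻¹ - C) hX hM (Dsym hX hC) hD0
  have h := trace_inv_lower (C := C) hX hM hC
  linarith

lemma posDef_smul {X : Matrix (Fin n) (Fin n) ℝ} (hX : X.PosDef) {c : ℝ} (hc : 0 < c) :
    (c • X).PosDef := by
  refine ⟨?_, fun x hx => ?_⟩
  · show (c • X)ᴴ = c • X
    rw [Matrix.conjTranspose_smul, star_trivial, hX.1]
  · have := mul_pos hc (hX.2 hx)
    simpa [Finsupp.mul_sum, mul_assoc, mul_left_comm] using this


end WaecsAux

/-- under `M ≻ 0` and the nondegeneracy assumption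
(`ΔW(d) ≠ 0` for every nonzero `d` with `𝟏ᵀd = 0`), the function
`p ↦ tr(W(p,T)⁻¹M)` is strictly convex on `X_T ∩ Δₙ`. -/
theorem waecs_strictly_convex {n : ℕ} (A : Matrix (Fin n) (Fin n) ℝ)
    (T : ℝ) (hT : 0 < T)
    (M : Matrix (Fin n) (Fin n) ℝ) (hM : M.PosDef)
    (Wi : Fin n → Matrix (Fin n) (Fin n) ℝ)
    (hWi : Wi = fun i => ∫ t in (0:ℝ)..T,
        NormedSpace.exp (t • A) * Matrix.single i i 1 *
          NormedSpace.exp (t • Aᵀ))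
    (W : (Fin n → ℝ) → Matrix (Fin n) (Fin n) ℝ)
    (hW : W = fun p => ∑ i : Fin n, p i • Wi i)
    (J : (Fin n → ℝ) → ℝ) (hJ : J = fun p => ((W p)⁻¹ * M).trace)
    (hinj : ∀ d : Fin n → ℝ, d ≠ 0 → (∑ i, d i) = 0 →
        (∑ i : Fin n, d i • Wi i) ≠ 0) :
    ∀ p q : Fin n → ℝ,
      (W p).PosDef → p ∈ stdSimplex ℝ (Fin n) →
      (W q).PosDef → q ∈ stdSimplex ℝ (Fin n) →
      p ≠ q → ∀ t ∈ Set.Ioo (0:ℝ) 1,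
        J ((1 - t) • p + t • q) < (1 - t) * J p + t * J q := by
  intro p q hp hps hq hqs hpq t ht
  obtain ⟨ht0, ht1⟩ := ht
  have ht1' : 0 < 1 - t := by linarith
  subst hJ
  set X := W p with hXdef
  set Y := W q with hYdef
  -- linearity of W
  have hWlin : W ((1 - t) • p + t • q) = (1 - t) • X + t • Y := by
    rw [hXdef, hYdef, hW]
    simp only
    rw [Finset.smul_sum, Finset.smul_sum, ← Finset.sum_add_distrib]
    refine Finset.sum_congr rfl fun i _ => ?_
    simp [add_smul, mul_smul]
  set Z := (1 - t) • X + t • Y with hZdef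
  have hZ : Z.PosDef := (posDef_smul hp ht1').add (posDef_smul hq ht0)
  have hZu : IsUnit Z.det := (Matrix.isUnit_iff_isUnit_det Z).mp hZ.isUnit
  set C := Z⁻¹ with hCdef
  have hCs : Cᵀ = C := by
    rw [hCdef, Matrix.transpose_nonsing_inv, sym_of_psd hZ.posSemidef]
  have hCZ : C * Z = 1 := Matrix.nonsing_inv_mul Z hZu
  have hCZC : C * Z * C = C := by rw [hCZ, Matrix.one_mul]
  -- value at the midpoint
  have hval : (Z⁻¹ * M).trace = 2 * (C * M).trace - ((C * Z * C) * M).trace := by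
    rw [hCZC, ← hCdef]; ring
  -- decomposition of C*Z*C
  have hdec : ((C * Z * C) * M).trace =
      (1 - t) * ((C * X * C) * M).trace + t * ((C * Y * C) * M).trace := by
    have : C * Z * C = (1 - t) • (C * X * C) + t • (C * Y * C) := by
      rw [hZdef]
      simp only [Matrix.mul_add, Matrix.add_mul, smul_mul_assoc, mul_smul_comm]
    rw [this]
    simp [Matrix.add_mul, Matrix.smul_mul, Matrix.trace_add, Matrix.trace_smul, smul_eq_mul]
  -- X ≠ Y
  have hXY : X ≠ Y := by
    intro hxy
    have hd0 : p - q ≠ 0 := sub_ne_zero.mpr hpq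
    have hsum : (∑ i, (p - q) i) = 0 := by
      simp only [Pi.sub_apply, Finset.sum_sub_distrib, hps.2, hqs.2, sub_self]
    apply hinj (p - q) hd0 hsum
    have : (∑ i : Fin n, (p - q) i • Wi i) = X - Y := by
      rw [hXdef, hYdef, hW]
      simp [Pi.sub_apply, sub_smul, Finset.sum_sub_distrib]
    rw [this, hxy, sub_self]
  -- C cannot equal both inverses
  have hnotboth : ¬(C = X⁻¹ ∧ C = Y⁻¹) := by
    rintro ⟨h1, h2⟩
    apply hXY
    have hXu : IsUnit X.det := (Matrix.isUnit_iff_isUnit_det X).mp hp.isUnit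
    have hYu : IsUnit Y.det := (Matrix.isUnit_iff_isUnit_det Y).mp hq.isUnit
    calc X = X⁻¹⁻¹ := (Matrix.nonsing_inv_nonsing_inv X hXu).symm
      _ = Y⁻¹⁻¹ := by rw [← h1, h2]
      _ = Y := Matrix.nonsing_inv_nonsing_inv Y hYu
  have hlex : 2 * (C * M).trace - ((C * X * C) * M).trace ≤ (X⁻¹ * M).trace :=
    trace_ineq_le hp hM hCs
  have hley : 2 * (C * M).trace - ((C * Y * C) * M).trace ≤ (Y⁻¹ * M).trace :=
    trace_ineq_le hq hM hCs
  have key : (Z⁻¹ * M).trace < (1 - t) * (X⁻¹ * M).trace + t * (Y⁻¹ * M).trace := by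
    by_cases hcx : C = X⁻¹
    · have hcy : C ≠ Y⁻¹ := fun h => hnotboth ⟨hcx, h⟩
      have hlty := trace_ineq_lt hq hM hCs hcy
      nlinarith
    · have hltx := trace_ineq_lt hp hM hCs hcx
      nlinarith
  simpa only [hWlin, ← hZdef] using key
end

section
/- For any A ∈ ℝⁿˣⁿ (n ≥ 2), for all sufficiently small T > 0 the matrices W₁(T) − Wₙ(T), ..., Wₙ₋₁(T) − Wₙ(T) are linearly independent, where Wᵢ(T) = ∫₀ᵀ exp(At)eᵢeᵢᵀexp(Aᵀt)dt. -/
open MeasureTheory Matrix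

attribute [local instance] Matrix.normedAddCommGroup Matrix.normedSpace

lemma base_li_aux {n : ℕ} :
    LinearIndependent ℝ (fun i : Fin n =>
      Matrix.single i.castSucc i.castSucc (1:ℝ) -
        Matrix.single (Fin.last n) (Fin.last n) 1) := by
  rw [Fintype.linearIndependent_iff]
  intro g hg i
  have h := congrFun (congrFun hg i.castSucc) i.castSucc
  have hlast : ¬ (Fin.last n = i.castSucc) := (Fin.castSucc_lt_last i).ne'
  simp [Matrix.sum_apply, Matrix.sub_apply, Matrix.smul_apply, Matrix.single,
    Fin.castSucc_inj, hlast, Finset.sum_ite_eq'] at h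
  exact h

/-- for any `A` (state dimension `n+1`, `n ≥ 1`), for all
sufficiently small `T > 0` the matrices `W₁(T)−Wₙ(T), …, Wₙ₋₁(T)−Wₙ(T)` are
linearly independent. -/
theorem gramian_diffs_linearIndependent_small_T {n : ℕ} (hn : 1 ≤ n)
    (A : Matrix (Fin (n+1)) (Fin (n+1)) ℝ)
    (Wi : Fin (n+1) → ℝ → Matrix (Fin (n+1)) (Fin (n+1)) ℝ)
    (hWi : Wi = fun i T => ∫ t in (0:ℝ)..T,
        NormedSpace.exp (t • A) * Matrix.single i i 1 *
          NormedSpace.exp (t • Aᵀ)) :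
    ∃ ε > 0, ∀ T ∈ Set.Ioo (0:ℝ) ε,
      LinearIndependent ℝ
        (fun i : Fin n => Wi i.castSucc T - Wi (Fin.last n) T) := by
  -- derivative of each Gramian at 0
  have hexp : ∀ B : Matrix (Fin (n+1)) (Fin (n+1)) ℝ,
      Continuous (fun t : ℝ => NormedSpace.exp (t • B)) := by
    intro B
    letI := Matrix.linftyOpNormedRing (α := ℝ) (n := Fin (n+1))
    letI := Matrix.linftyOpNormedAlgebra (α := ℝ) (R := ℝ) (n := Fin (n+1))
    letI : NormedAlgebra ℚ (Matrix (Fin (n+1)) (Fin (n+1)) ℝ) := NormedAlgebra.restrictScalars ℚ ℝ _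
    exact (@NormedSpace.exp_continuous _ _ _ (by exact (inferInstance : CompleteSpace (Fin (n+1) → Fin (n+1) → ℝ)))).comp (continuous_id.smul continuous_const)
  have hW : ∀ i : Fin (n+1),
      HasDerivAt (Wi i) (Matrix.single i i 1) 0 := by
    intro i
    have hf : Continuous (fun t : ℝ => NormedSpace.exp (t • A) *
        Matrix.single i i 1 * NormedSpace.exp (t • Aᵀ)) :=
      ((hexp A).matrix_mul continuous_const).matrix_mul (hexp Aᵀ)
    have h := (hf.integral_hasStrictDerivAt 0 0).hasDerivAt
    rw [hWi]
    simp [NormedSpace.exp_zero] at h; exact h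
  have hW0 : ∀ i : Fin (n+1), Wi i 0 = 0 := by
    intro i; rw [hWi]; simp
  -- the difference functions and their limit
  set V : Fin n → Matrix (Fin (n+1)) (Fin (n+1)) ℝ := fun i =>
    Matrix.single i.castSucc i.castSucc (1:ℝ) -
      Matrix.single (Fin.last n) (Fin.last n) 1 with hV
  have hD : ∀ i : Fin n,
      HasDerivAt (fun T => Wi i.castSucc T - Wi (Fin.last n) T) (V i) 0 :=
    fun i => (hW i.castSucc).sub (hW (Fin.last n))
  have hslope : ∀ i : Fin n,
      Filter.Tendsto (fun T : ℝ => T⁻¹ • (Wi i.castSucc T - Wi (Fin.last n) T))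
        (nhdsWithin 0 (Set.Ioi 0)) (nhds (V i)) := by
    intro i
    have h := (hasDerivAt_iff_tendsto_slope.mp (hD i)).mono_left
      (nhdsWithin_mono 0 (fun x hx => (ne_of_gt hx : x ≠ 0)))
    refine h.congr' ?_
    filter_upwards [self_mem_nhdsWithin] with T hT
    simp [slope_fun_def, hW0, (Set.mem_Ioi.mp hT).ne']
  -- openness of linear independence
  have hLIopen : IsOpen { f : Fin n → Matrix (Fin (n+1)) (Fin (n+1)) ℝ |
      LinearIndependent ℝ f } := isOpen_setOf_linearIndependent
  have hVmem : V ∈ { f : Fin n → Matrix (Fin (n+1)) (Fin (n+1)) ℝ |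
      LinearIndependent ℝ f } := base_li_aux
  have htend : Filter.Tendsto
      (fun T : ℝ => fun i : Fin n => T⁻¹ • (Wi i.castSucc T - Wi (Fin.last n) T))
      (nhdsWithin 0 (Set.Ioi 0)) (nhds V) := by
    rw [tendsto_pi_nhds]; exact fun i => hslope i
  have hev : ∀ᶠ T in nhdsWithin 0 (Set.Ioi 0),
      LinearIndependent ℝ
        (fun i : Fin n => T⁻¹ • (Wi i.castSucc T - Wi (Fin.last n) T)) :=
    htend.eventually (hLIopen.mem_nhds hVmem)
  rw [Filter.eventually_iff, mem_nhdsGT_iff_exists_Ioo_subset] at hev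
  obtain ⟨u, hu, hsub⟩ := hev
  refine ⟨u, hu, fun T hT => ?_⟩
  have hli := hsub hT
  have hTne : (T : ℝ) ≠ 0 := (hT.1).ne'
  have := hli.units_smul (fun _ => Units.mk0 T hTne)
  convert this using 1
  funext i
  simp [Pi.smul_apply', smul_smul, mul_inv_cancel₀ hTne]
end
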